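/- For any GK-model M = (W,S,e), define S⁺(x,y) = min(S_□(x,y), S_◇(x,y)) where S_□(x,y) = inf over all formulas φ of (e(x,□φ) ⇒ e(y,φ)) and S_◇(x,y) = inf over all formulas φ of (e(y,φ) ⇒ e(x,◇φ)). Then S(x,y) ≤ S⁺(x,y), and the model (W, S⁺, e↾Var) assigns the same truth value as M to every formula at every world: e⁺(x,φ) = e(x,φ) for all x, φ. -/

import Mathlib

open scoped Classical

noncomputable def gimp (a b : ℝ) : ℝ := if a ≤ b then 1 else b

inductive GForm : Type where
  | bot : GForm
  | var : ℕ → GForm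
  | and : GForm → GForm → GForm
  | or : GForm → GForm → GForm
  | imp : GForm → GForm → GForm
  | box : GForm → GForm
  | dia : GForm → GForm

def GForm.neg (φ : GForm) : GForm := φ.imp .bot

noncomputable def ev {W : Type} (S : W → W → ℝ) (e : ℕ → W → ℝ) : GForm → W → ℝ
  | .bot, _ => 0
  | .var p, x => e p x
  | .and φ ψ, x => min (ev S e φ x) (ev S e ψ x)
  | .or φ ψ, x => max (ev S e φ x) (ev S e ψ x)
  | .imp φ ψ, x => gimp (ev S e φ x) (ev S e ψ x)
  | .box φ, x => ⨅ y, gimp (S x y) (ev S e φ y)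
  | .dia φ, x => ⨆ y, min (S x y) (ev S e φ y)

noncomputable def Splus {W : Type} (S : W → W → ℝ) (e : ℕ → W → ℝ) (x y : W) : ℝ :=
  min (⨅ φ : GForm, gimp (ev S e (.box φ) x) (ev S e φ y))
      (⨅ φ : GForm, gimp (ev S e φ y) (ev S e (.dia φ) x))

/-! Residuation `s ≤ (a ⇒ b) ↔ min s a ≤ b` gives `S ≤ S⁺` at once from the semantics of `□` and `◇`.
For the converse, enlarging the accessibility relation can only lower `□`-values and raise
`◇`-values; but `S⁺(x,y) ≤ e(x,□φ) ⇒ e(y,φ)` and `S⁺(x,y) ≤ e(y,φ) ⇒ e(x,◇φ)` say precisely that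
`e(x,□φ)` remains a lower bound and `e(x,◇φ)` an upper bound of the new infimum and supremum, so by
induction on `φ` no value changes. -/

open Set

instance : Inhabited GForm := ⟨.bot⟩

section Residuum

variable {s a b : ℝ}

lemma gimp_nonneg (hb : 0 ≤ b) : 0 ≤ gimp a b := by
  unfold gimp; split <;> linarith

lemma gimp_le_one (hb : b ≤ 1) : gimp a b ≤ 1 := by
  unfold gimp; split <;> linarith

lemma le_gimp_of_min_le (hs : s ≤ 1) (h : min s a ≤ b) : s ≤ gimp a b := by
  unfold gimp
  split_ifs with hab
  · exact hs
  · exact (min_le_iff.1 h).resolve_right hab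

lemma min_le_of_le_gimp (h : s ≤ gimp a b) : min s a ≤ b := by
  unfold gimp at h
  split_ifs at h with hab
  · exact (min_le_right _ _).trans hab
  · exact (min_le_left _ _).trans h

lemma gimp_le_gimp_left {a' : ℝ} (hb : b ≤ 1) (h : a' ≤ a) : gimp a b ≤ gimp a' b := by
  unfold gimp
  split_ifs with h1 h2 h2
  · rfl
  · exact absurd (h.trans h1) h2
  · exact hb
  · rfl

end Residuum

section Bounds

variable {ι : Type*} {s t f : ι → ℝ}

lemma bddBelow_range_gimp (hf : ∀ i, 0 ≤ f i) : BddBelow (range fun i => gimp (s i) (f i)) :=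
  ⟨0, by rintro _ ⟨i, rfl⟩; exact gimp_nonneg (hf i)⟩

lemma bddAbove_range_min (hf : ∀ i, f i ≤ 1) : BddAbove (range fun i => min (s i) (f i)) :=
  ⟨1, by rintro _ ⟨i, rfl⟩; exact min_le_of_right_le (hf i)⟩

lemma iInf_gimp_eq_of_le [Nonempty ι] (hf : ∀ i, f i ∈ Icc (0 : ℝ) 1) (hst : ∀ i, s i ≤ t i)
    (ht : ∀ i, t i ≤ gimp (⨅ j, gimp (s j) (f j)) (f i)) :
    ⨅ i, gimp (t i) (f i) = ⨅ i, gimp (s i) (f i) := by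
  have hbdd : ∀ u : ι → ℝ, BddBelow (range fun i => gimp (u i) (f i)) :=
    fun _ => bddBelow_range_gimp fun i => (hf i).1
  have hle_one : ⨅ j, gimp (s j) (f j) ≤ 1 :=
    ciInf_le_of_le (hbdd s) (Classical.arbitrary ι) (gimp_le_one (hf _).2)
  refine le_antisymm (ciInf_mono (hbdd t) fun i => gimp_le_gimp_left (hf i).2 (hst i)) ?_
  refine le_ciInf fun i => le_gimp_of_min_le hle_one ?_
  rw [min_comm]
  exact min_le_of_le_gimp (ht i)

lemma iSup_min_eq_of_le [Nonempty ι] (hf : ∀ i, f i ≤ 1) (hst : ∀ i, s i ≤ t i)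
    (ht : ∀ i, t i ≤ gimp (f i) (⨆ j, min (s j) (f j))) :
    ⨆ i, min (t i) (f i) = ⨆ i, min (s i) (f i) :=
  le_antisymm (ciSup_le fun i => min_le_of_le_gimp (ht i))
    (ciSup_mono (bddAbove_range_min hf) fun i => min_le_min_right _ (hst i))

end Bounds

section Model

variable {W : Type} {S : W → W → ℝ} {e : ℕ → W → ℝ}

lemma ev_mem_Icc (hS : ∀ x y, 0 ≤ S x y) (he : ∀ p x, e p x ∈ Icc (0 : ℝ) 1) :
    ∀ (φ : GForm) (x : W), ev S e φ x ∈ Icc (0 : ℝ) 1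
  | .bot, _ => ⟨le_rfl, zero_le_one⟩
  | .var p, x => he p x
  | .and φ ψ, x =>
    ⟨le_min (ev_mem_Icc hS he φ x).1 (ev_mem_Icc hS he ψ x).1,
      min_le_of_left_le (ev_mem_Icc hS he φ x).2⟩
  | .or φ ψ, x =>
    ⟨le_max_of_le_left (ev_mem_Icc hS he φ x).1,
      max_le (ev_mem_Icc hS he φ x).2 (ev_mem_Icc hS he ψ x).2⟩
  | .imp _ ψ, x => ⟨gimp_nonneg (ev_mem_Icc hS he ψ x).1, gimp_le_one (ev_mem_Icc hS he ψ x).2⟩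
  | .box φ, x =>
    have : Nonempty W := ⟨x⟩
    ⟨le_ciInf fun y => gimp_nonneg (ev_mem_Icc hS he φ y).1,
      ciInf_le_of_le (bddBelow_range_gimp fun y => (ev_mem_Icc hS he φ y).1) x
        (gimp_le_one (ev_mem_Icc hS he φ x).2)⟩
  | .dia φ, x =>
    have : Nonempty W := ⟨x⟩
    ⟨le_ciSup_of_le (bddAbove_range_min fun y => (ev_mem_Icc hS he φ y).2) x
        (le_min (hS x x) (ev_mem_Icc hS he φ x).1),
      ciSup_le fun y => min_le_of_right_le (ev_mem_Icc hS he φ y).2⟩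

variable (hS : ∀ x y, S x y ∈ Icc (0 : ℝ) 1) (he : ∀ p x, e p x ∈ Icc (0 : ℝ) 1)
include hS he

lemma le_Splus (x y : W) : S x y ≤ Splus S e x y := by
  have hev := ev_mem_Icc (fun x y => (hS x y).1) he
  refine le_min (le_ciInf fun φ => le_gimp_of_min_le (hS x y).2 ?_)
    (le_ciInf fun φ => le_gimp_of_min_le (hS x y).2 ?_)
  · rw [min_comm]
    exact min_le_of_le_gimp (ciInf_le (bddBelow_range_gimp fun z => (hev φ z).1) y)
  · exact le_ciSup (bddAbove_range_min fun z => (hev φ z).2) y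

lemma Splus_le_gimp_box (φ : GForm) (x y : W) :
    Splus S e x y ≤ gimp (ev S e (.box φ) x) (ev S e φ y) :=
  have hev := ev_mem_Icc (fun x y => (hS x y).1) he
  (min_le_left _ _).trans (ciInf_le (bddBelow_range_gimp fun φ => (hev φ y).1) φ)

lemma Splus_le_gimp_dia (φ : GForm) (x y : W) :
    Splus S e x y ≤ gimp (ev S e φ y) (ev S e (.dia φ) x) :=
  have hev := ev_mem_Icc (fun x y => (hS x y).1) he
  (min_le_right _ _).trans (ciInf_le (bddBelow_range_gimp fun φ => (hev (.dia φ) x).1) φ)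

lemma ev_Splus (φ : GForm) (x : W) : ev (Splus S e) e φ x = ev S e φ x := by
  have : Nonempty W := ⟨x⟩
  have hev := ev_mem_Icc (fun x y => (hS x y).1) he
  induction φ generalizing x with
  | bot => rfl
  | var p => rfl
  | and φ ψ ihφ ihψ => simp only [ev, ihφ, ihψ]
  | or φ ψ ihφ ihψ => simp only [ev, ihφ, ihψ]
  | imp φ ψ ihφ ihψ => simp only [ev, ihφ, ihψ]
  | box φ ih =>
    simp only [ev, ih]
    exact iInf_gimp_eq_of_le (hev φ) (le_Splus hS he x) (Splus_le_gimp_box hS he φ x)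
  | dia φ ih =>
    simp only [ev, ih]
    exact iSup_min_eq_of_le (fun y => (hev φ y).2) (le_Splus hS he x)
      (Splus_le_gimp_dia hS he φ x)

end Model

theorem stmt10_general (W : Type) (S : W → W → ℝ) (e : ℕ → W → ℝ)
    (hS : ∀ x y, S x y ∈ Set.Icc (0:ℝ) 1) (he : ∀ p x, e p x ∈ Set.Icc (0:ℝ) 1) :
    (∀ x y, S x y ≤ Splus S e x y) ∧
    (∀ (φ : GForm) (x : W), ev (Splus S e) e φ x = ev S e φ x) :=
  ⟨le_Splus hS he, ev_Splus hS he⟩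

theorem stmt10 (W : Type) [Nonempty W] (S : W → W → ℝ) (e : ℕ → W → ℝ)
    (hS : ∀ x y, S x y ∈ Set.Icc (0:ℝ) 1) (he : ∀ p x, e p x ∈ Set.Icc (0:ℝ) 1) :
    (∀ x y, S x y ≤ Splus S e x y) ∧
    (∀ (φ : GForm) (x : W), ev (Splus S e) e φ x = ev S e φ x) :=
  stmt10_general W S e hS he
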